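/- arXiv:2101.07000 — 2 statements merged into one kernel-verified Lean document; each statement's English description precedes it below -/
import Mathlib

section
/- Let (T,σ) be the least resolved tree (with root ρ) of some 2-colored best match graph G(T,σ). Then G(T,σ) is connected if and only if the set of support leaves of the root is nonempty, i.e., S_ρ ≠ ∅. -/
/-- A (finite) rooted tree on vertex type `V`, encoded by its ancestor relation:
`anc u v` means that `u` is an ancestor of `v`, i.e. `u` lies on the path from
the root to `v` (in particular the relation is reflexive, `v ⪯_T u ↔ anc u v`). -/
structure RTree (V : Type) where
  anc : V → V → Prop
  refl : ∀ v, anc v v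
  antisymm : ∀ u v, anc u v → anc v u → u = v
  trans : ∀ u v w, anc u v → anc v w → anc u w
  root : V
  root_anc : ∀ v, anc root v
  chain : ∀ u v w, anc u w → anc v w → anc u v ∨ anc v u

namespace RTree

variable {V C : Type}

/-- a leaf: a vertex without proper descendants. -/
def IsLeaf (T : RTree V) (v : V) : Prop := ∀ w, T.anc v w → w = v

/-- `v` is a child of `u`: `v ≺_T u` with no vertex strictly in between. -/
def IsChild (T : RTree V) (v u : V) : Prop :=
  T.anc u v ∧ u ≠ v ∧ ∀ w, T.anc u w → T.anc w v → w = u ∨ w = v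

/-- phylogenetic: every inner vertex has at least two children. -/
def Phylo (T : RTree V) : Prop :=
  ∀ u, ¬ T.IsLeaf u → ∃ v w, v ≠ w ∧ T.IsChild v u ∧ T.IsChild w u

/-- the leaf set `L(T)`. -/
def leaves (T : RTree V) : Set V := {x | T.IsLeaf x}

/-- `y` is a best match of `x` in the leaf-colored tree `(T,σ)`:
both are leaves, `σ x ≠ σ y`, and for every leaf `y'` of the color `σ y` we have
`lca(x,y) ⪯_T lca(x,y')`, i.e. every common ancestor of `x` and `y'` is an
ancestor of `y`.  These are exactly the arcs of the best match graph `G(T,σ)`,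
whose vertex set is the leaf set of `T`. -/
def BestMatch (T : RTree V) (σ : V → C) (x y : V) : Prop :=
  T.IsLeaf x ∧ T.IsLeaf y ∧ σ x ≠ σ y ∧
    ∀ y', T.IsLeaf y' → σ y' = σ y →
      ∀ u, T.anc u x → T.anc u y' → T.anc u y

/-- the subtree `T(v)` of `T` rooted at `v`. -/
def subtree (T : RTree V) (v : V) : RTree {w : V // T.anc v w} where
  anc a b := T.anc a.1 b.1
  refl a := T.refl a.1
  antisymm a b h1 h2 := Subtype.ext (T.antisymm _ _ h1 h2)
  trans a b c h1 h2 := T.trans _ _ _ h1 h2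
  root := ⟨v, T.refl v⟩
  root_anc a := a.2
  chain a b c h1 h2 := T.chain _ _ _ h1 h2

/-- contraction of the tree edge between the non-root vertex `v` and its
parent: the vertex `v` is identified with its parent, i.e. deleted. -/
def contract (T : RTree V) (v : V) (hv : v ≠ T.root) : RTree {w : V // w ≠ v} where
  anc a b := T.anc a.1 b.1
  refl a := T.refl a.1
  antisymm a b h1 h2 := Subtype.ext (T.antisymm _ _ h1 h2)
  trans a b c h1 h2 := T.trans _ _ _ h1 h2
  root := ⟨T.root, Ne.symm hv⟩
  root_anc a := T.root_anc a.1
  chain a b c h1 h2 := T.chain _ _ _ h1 h2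

/-- The edge of `T` between `v` and its parent is redundant with respect to
`G(T,σ)`: contracting it yields a tree that still explains `G(T,σ)`, i.e. the
contracted tree has the same leaf set and induces the same best-match arcs.
(Edges of a rooted tree are identified with their lower endpoint `v`.) -/
def Redundant (T : RTree V) (σ : V → C) (v : V) : Prop :=
  ∃ hv : v ≠ T.root,
    ¬ T.IsLeaf v ∧
    (∀ w : {w : V // w ≠ v}, T.IsLeaf w.1 ↔ (T.contract v hv).IsLeaf w) ∧
    (∀ x y : {w : V // w ≠ v},
      (T.BestMatch σ x.1 y.1 ↔ (T.contract v hv).BestMatch (fun w => σ w.1) x y))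

/-- `(T,σ)` is the least resolved tree (of the BMG `G(T,σ)`): a phylogenetic
tree none of whose edges is redundant. -/
def LeastResolved (T : RTree V) (σ : V → C) : Prop :=
  T.Phylo ∧ ∀ v, ¬ T.Redundant σ v

/-- the support leaves `S_u = child_T(u) ∩ L(T)` of a vertex `u`. -/
def SupportLeaves (T : RTree V) (u : V) : Set V :=
  {v | T.IsChild v u ∧ T.IsLeaf v}

/-- the set of colors `σ(L(T(v)))` occurring on leaves of the subtree `T(v)`. -/
def subColors (T : RTree V) (σ : V → C) (v : V) : Set C :=
  σ '' {x | T.IsLeaf x ∧ T.anc v x}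

/-- the set of colors `σ(L(T))` of the leaves of `T`. -/
def leafColors (T : RTree V) (σ : V → C) : Set C := σ '' T.leaves

/-- the leaf coloring uses exactly two colors, i.e. `G(T,σ)` is a 2-BMG. -/
def TwoColored (T : RTree V) (σ : V → C) : Prop :=
  ∃ c₁ c₂ : C, c₁ ≠ c₂ ∧ T.leafColors σ = {c₁, c₂}

end RTree

/-- the digraph with arc relation `A`, restricted to the vertex set `S`, is
connected: between any two vertices of `S` there is a path inside `S` in the
underlying undirected graph. -/
def ConnectedOn {β : Type} (A : β → β → Prop) (S : Set β) : Prop :=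
  S.Nonempty ∧ ∀ x ∈ S, ∀ y ∈ S,
    Relation.ReflTransGen (fun a b => a ∈ S ∧ b ∈ S ∧ (A a b ∨ A b a)) x y

/-- `K` is a connected component of the digraph induced by the arc relation `A`
on the vertex set `S`: a maximal connected subset of `S`. -/
def IsComponent {β : Type} (A : β → β → Prop) (S : Set β) (K : Set β) : Prop :=
  K ⊆ S ∧ ConnectedOn A K ∧
    ∀ K', K ⊆ K' → K' ⊆ S → ConnectedOn A K' → K' = K

namespace RTree

/-- the best match graph `G(T,σ)` (on the leaf set of `T`) is connected. -/
def BMGConnected {V C : Type} (T : RTree V) (σ : V → C) : Prop :=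
  ConnectedOn (T.BestMatch σ) T.leaves

/-- the umbrella vertices `U(G,σ)` of the BMG `G(T,σ)`: leaves having an
out-arc to every differently colored leaf. -/
def Umbrella {V C : Type} (T : RTree V) (σ : V → C) : Set V :=
  {x | T.IsLeaf x ∧ ∀ y, T.IsLeaf y → σ y ≠ σ x → T.BestMatch σ x y}

/-- `S` is closed under in-neighbours in `G(T,σ)`: `x ∈ S → N⁻(x) ⊆ S`. -/
def InClosed {V C : Type} (T : RTree V) (σ : V → C) (S : Set V) : Prop :=
  ∀ x ∈ S, ∀ y, T.BestMatch σ y x → y ∈ S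

/-- `S` is a support set of `G(T,σ)`: a maximal subset of the umbrella
vertices that is closed under in-neighbours. -/
def IsSupportSet {V C : Type} (T : RTree V) (σ : V → C) (S : Set V) : Prop :=
  S ⊆ T.Umbrella σ ∧ T.InClosed σ S ∧
    ∀ S', S ⊆ S' → S' ⊆ T.Umbrella σ → T.InClosed σ S' → S' = S

end RTree

/-!
If the root `ρ` has a leaf child `v`, then `v` best-matches every leaf of the other color, and
every leaf of `v`'s color best-matches some leaf of the other color, so all leaves are joined
through `v`.
Conversely, if `G(T,σ)` is connected, a path from a leaf below one child of `ρ` to a leaf below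
another child contains an arc leaving or entering some subtree `T(u)`, `u` a child of `ρ`, and such
an arc forces one of the two colors to be absent from `T(u)`. With only two colors the leaves of
`T(u)` are then monochromatic, which makes the edge above `u` redundant unless `u` is a leaf; so in
the least resolved tree `u ∈ S_ρ`.
-/

theorem exists_maximal_of_trans_of_antisymm {α : Type*} [Finite α] {r : α → α → Prop}
    (htrans : ∀ a b c, r a b → r b c → r a c) (hanti : ∀ a b, r a b → r b a → a = b)
    {S : Set α} (hS : S.Nonempty) : ∃ m ∈ S, ∀ z ∈ S, r m z → z = m := by
  let above : α → α → Prop := fun z m => r m z ∧ z ≠ m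
  have : IsTrans α above :=
    ⟨fun a b c hab hbc => ⟨htrans _ _ _ hbc.1 hab.1,
      fun hac => hab.2 (hanti _ _ (hac ▸ hbc.1) hab.1)⟩⟩
  have : Std.Irrefl above := ⟨fun a h => h.2 rfl⟩
  obtain ⟨m, hm, hmax⟩ := (Finite.wellFounded_of_trans_of_irrefl above).has_min S hS
  exact ⟨m, hm, fun z hz hmz => by_contra fun hzm => hmax z hz ⟨hmz, hzm⟩⟩

theorem Relation.ReflTransGen.exists_step_leaving {β : Type*} {R : β → β → Prop}
    {P : β → Prop} {x y : β} (h : Relation.ReflTransGen R x y) (hx : P x) (hy : ¬ P y) :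
    ∃ a b, R a b ∧ P a ∧ ¬ P b := by
  induction h using Relation.ReflTransGen.head_induction_on with
  | refl => exact absurd hx hy
  | @head a c hac _ ih =>
    by_cases hc : P c
    · exact ih hc
    · exact ⟨a, c, hac, hx, hc⟩

namespace ConnectedOn

variable {β : Type} {A : β → β → Prop} {S : Set β}

theorem of_forall_reflTransGen {v : β} (hv : v ∈ S)
    (h : ∀ x ∈ S,
      Relation.ReflTransGen (fun a b => a ∈ S ∧ b ∈ S ∧ (A a b ∨ A b a)) v x) :
    ConnectedOn A S := by
  have : Std.Symm (fun a b => a ∈ S ∧ b ∈ S ∧ (A a b ∨ A b a)) :=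
    ⟨fun _ _ hab => ⟨hab.2.1, hab.1, hab.2.2.symm⟩⟩
  exact ⟨⟨v, hv⟩, fun x hx y hy => (Std.Symm.symm _ _ (h x hx)).trans (h y hy)⟩

theorem exists_arc_leaving (hS : ConnectedOn A S) {P : β → Prop} {x y : β} (hx : x ∈ S)
    (hy : y ∈ S) (hPx : P x) (hPy : ¬ P y) :
    ∃ a ∈ S, ∃ b ∈ S, P a ∧ ¬ P b ∧ (A a b ∨ A b a) := by
  obtain ⟨a, b, ⟨ha, hb, hab⟩, hPa, hPb⟩ := (hS.2 x hx y hy).exists_step_leaving hPx hPy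
  exact ⟨a, ha, b, hb, hPa, hPb, hab⟩

end ConnectedOn

namespace RTree

variable {V C : Type} (T : RTree V) (σ : V → C)

theorem exists_isLeaf_anc [Finite V] (v : V) : ∃ x, T.IsLeaf x ∧ T.anc v x := by
  obtain ⟨m, hm, hmax⟩ := exists_maximal_of_trans_of_antisymm T.trans T.antisymm
    (S := {z | T.anc v z}) ⟨v, T.refl v⟩
  exact ⟨m, fun w hw => hmax w (T.trans _ _ _ hm hw) hw, hm⟩

theorem exists_isChild_root_anc [Finite V] {z : V} (hz : z ≠ T.root) :
    ∃ u, T.IsChild u T.root ∧ T.anc u z := by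
  obtain ⟨m, ⟨hmz, hmr⟩, hmax⟩ :=
    exists_maximal_of_trans_of_antisymm (r := fun a b => T.anc b a)
    (fun a b c h1 h2 => T.trans _ _ _ h2 h1) (fun a b h1 h2 => T.antisymm _ _ h2 h1)
    (S := {w | T.anc w z ∧ w ≠ T.root}) ⟨z, T.refl z, hz⟩
  refine ⟨m, ⟨T.root_anc m, Ne.symm hmr, fun w _ hwm => ?_⟩, hmz⟩
  by_cases hwr : w = T.root
  · exact Or.inl hwr
  · exact Or.inr (hmax w ⟨T.trans _ _ _ hwm hmz, hwr⟩ hwm)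

theorem eq_of_isChild_root_of_anc {u w z : V} (hu : T.IsChild u T.root)
    (hw : T.IsChild w T.root) (huz : T.anc u z) (hwz : T.anc w z) : u = w := by
  rcases T.chain u w z huz hwz with huw | hwu
  · exact ((hw.2.2 u (T.root_anc u) huw).resolve_left hu.2.1.symm)
  · exact ((hu.2.2 w (T.root_anc w) hwu).resolve_left hw.2.1.symm).symm

-- Best matches of color `σ y₀` lie below the lowest ancestor of `x` above a leaf of that color.
theorem exists_bestMatch [Finite V] {x y₀ : V} (hx : T.IsLeaf x) (hy₀ : T.IsLeaf y₀)
    (hne : σ x ≠ σ y₀) : ∃ y, T.BestMatch σ x y ∧ σ y = σ y₀ := by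
  obtain ⟨m, ⟨hmx, y, hy, hyc, hmy⟩, hmin⟩ := exists_maximal_of_trans_of_antisymm T.trans
    T.antisymm (S := {m | T.anc m x ∧ ∃ y, T.IsLeaf y ∧ σ y = σ y₀ ∧ T.anc m y})
    ⟨T.root, T.root_anc x, y₀, hy₀, rfl, T.root_anc y₀⟩
  refine ⟨y, ⟨hx, hy, hyc ▸ hne, fun y' hy' hy'c u hux huy' => ?_⟩, hyc⟩
  rcases T.chain u m x hux hmx with hum | hmu
  · exact T.trans _ _ _ hum hmy
  · rw [hmin u ⟨hux, y', hy', hy'c.trans hyc, huy'⟩ hmu]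
    exact hmy

theorem bestMatch_of_mem_supportLeaves_root {v y : V} (hv : v ∈ T.SupportLeaves T.root)
    (hy : T.IsLeaf y) (hne : σ v ≠ σ y) : T.BestMatch σ v y := by
  refine ⟨hv.2, hy, hne, fun y' hy' hy'c u huv huy' => ?_⟩
  rcases hv.1.2.2 u (T.root_anc u) huv with rfl | rfl
  · exact T.root_anc y
  · exact absurd (hv.2 y' huy' ▸ hy'c) hne

theorem not_mem_subColors_of_bestMatch {u a b : V} (hab : T.BestMatch σ a b) (hua : T.anc u a)
    (hub : ¬ T.anc u b) : σ b ∉ T.subColors σ u := by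
  rintro ⟨z, ⟨hz, huz⟩, hzb⟩
  exact hub (hab.2.2.2 z hz hzb u hua huz)

theorem isLeaf_contract_iff {v : V} (hv : v ≠ T.root) (hnl : ¬ T.IsLeaf v) (w : {w // w ≠ v}) :
    (T.contract v hv).IsLeaf w ↔ T.IsLeaf w.1 := by
  refine ⟨fun hl z hwz => ?_, fun hl z hwz => Subtype.ext (hl z.1 hwz)⟩
  by_cases hzv : z = v
  · subst hzv
    obtain ⟨z', hvz', hz'v⟩ : ∃ z', T.anc z z' ∧ z' ≠ z := by
      simpa [IsLeaf] using hnl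
    have hwz' : z' = w.1 := congrArg Subtype.val (hl ⟨z', hz'v⟩ (T.trans _ _ _ hwz hvz'))
    exact absurd (T.antisymm _ _ hwz (hwz' ▸ hvz')) w.2
  · exact congrArg Subtype.val (hl ⟨z, hzv⟩ hwz)

-- Contracting `v` only removes `v` as a candidate for `lca(x, y')`, and `v` can be one only when
-- `x` and `y'` are differently colored leaves of `T(v)`.
theorem bestMatch_contract_iff {v : V} (hv : v ≠ T.root) (hnl : ¬ T.IsLeaf v)
    (hmono : (T.subColors σ v).Subsingleton) (x y : {w // w ≠ v}) :
    (T.contract v hv).BestMatch (fun w => σ w.1) x y ↔ T.BestMatch σ x.1 y.1 := by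
  simp only [BestMatch, T.isLeaf_contract_iff hv hnl]
  refine and_congr_right fun hx => and_congr_right fun _ => and_congr_right fun hxy => ?_
  refine ⟨fun h y' hy' hy'c u hux huy' => ?_,
    fun h y' hy' hy'c u hux huy' => h y'.1 hy' hy'c u hux huy'⟩
  have hy'v : y' ≠ v := fun h => hnl (h ▸ hy')
  by_cases huv : u = v
  · subst huv
    exact absurd (hmono ⟨x, ⟨hx, hux⟩, rfl⟩ ⟨y', ⟨hy', huy'⟩, rfl⟩) (hy'c ▸ hxy)
  · exact h ⟨y', hy'v⟩ hy' hy'c ⟨u, huv⟩ hux huy'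

theorem redundant_of_subColors_subsingleton {v : V} (hv : v ≠ T.root) (hnl : ¬ T.IsLeaf v)
    (hmono : (T.subColors σ v).Subsingleton) : T.Redundant σ v :=
  ⟨hv, hnl, fun w => (T.isLeaf_contract_iff hv hnl w).symm,
    fun x y => (T.bestMatch_contract_iff σ hv hnl hmono x y).symm⟩

theorem subColors_subset_leafColors (v : V) : T.subColors σ v ⊆ T.leafColors σ :=
  Set.image_mono fun _ hx => hx.1

theorem subColors_subsingleton_of_twoColored (h2 : T.TwoColored σ) {v : V} {c : C}
    (hc : c ∈ T.leafColors σ) (hvc : c ∉ T.subColors σ v) :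
    (T.subColors σ v).Subsingleton := by
  obtain ⟨c₁, c₂, -, hcol⟩ := h2
  intro a ha b hb
  have ha' := hcol ▸ T.subColors_subset_leafColors σ v ha
  have hb' := hcol ▸ T.subColors_subset_leafColors σ v hb
  rw [hcol] at hc
  simp only [Set.mem_insert_iff, Set.mem_singleton_iff] at ha' hb' hc
  have hac : a ≠ c := fun h => hvc (h ▸ ha)
  have hbc : b ≠ c := fun h => hvc (h ▸ hb)
  grind

theorem exists_isLeaf_color_ne_of_twoColored (h2 : T.TwoColored σ) (c : C) :
    ∃ y, T.IsLeaf y ∧ σ y ≠ c := by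
  obtain ⟨c₁, c₂, hc₁₂, hcol⟩ := h2
  obtain ⟨c', hc', hc'c⟩ : ∃ c' ∈ T.leafColors σ, c' ≠ c := by
    rw [hcol]
    by_cases h : c₁ = c
    · exact ⟨c₂, by simp, h ▸ hc₁₂.symm⟩
    · exact ⟨c₁, by simp, h⟩
  obtain ⟨y, hy, rfl⟩ := hc'
  exact ⟨y, hy, hc'c⟩

theorem not_isLeaf_root_of_twoColored (h2 : T.TwoColored σ) : ¬ T.IsLeaf T.root := by
  intro hr
  obtain ⟨x, hx, -⟩ := T.exists_isLeaf_color_ne_of_twoColored σ h2 (σ T.root)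
  obtain ⟨y, hy, hyx⟩ := T.exists_isLeaf_color_ne_of_twoColored σ h2 (σ x)
  exact hyx (by rw [hr x (T.root_anc x), hr y (T.root_anc y)])

theorem bmgConnected_of_mem_supportLeaves_root [Finite V]
    (hcol : ∀ c, ∃ y, T.IsLeaf y ∧ σ y ≠ c) {v : V} (hv : v ∈ T.SupportLeaves T.root) :
    T.BMGConnected σ := by
  refine ConnectedOn.of_forall_reflTransGen hv.2 fun x hx => ?_
  by_cases hxv : σ x = σ v
  · obtain ⟨y₀, hy₀, hy₀v⟩ := hcol (σ v)
    obtain ⟨y, hxy, hyy₀⟩ := T.exists_bestMatch σ hx hy₀ (hxv ▸ hy₀v.symm)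
    have hvy : T.BestMatch σ v y := T.bestMatch_of_mem_supportLeaves_root σ hv hxy.2.1
      (hyy₀ ▸ hy₀v.symm)
    exact .head ⟨hv.2, hxy.2.1, .inl hvy⟩ (.single ⟨hxy.2.1, hx, .inr hxy⟩)
  · exact .single
      ⟨hv.2, hx, .inl (T.bestMatch_of_mem_supportLeaves_root σ hv hx (Ne.symm hxv))⟩

theorem exists_isChild_root_not_mem_subColors [Finite V] (hphylo : T.Phylo)
    (hroot : ¬ T.IsLeaf T.root) (hconn : T.BMGConnected σ) :
    ∃ u, T.IsChild u T.root ∧ ∃ c ∈ T.leafColors σ, c ∉ T.subColors σ u := by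
  obtain ⟨u, w, huw, hu, hw⟩ := hphylo T.root hroot
  obtain ⟨xu, hxu, huxu⟩ := T.exists_isLeaf_anc u
  obtain ⟨xw, hxw, hwxw⟩ := T.exists_isLeaf_anc w
  have huxw : ¬ T.anc u xw := fun h => huw (T.eq_of_isChild_root_of_anc hu hw h hwxw)
  obtain ⟨a, -, b, hb, hua, hub, hab | hba⟩ := hconn.exists_arc_leaving hxu hxw huxu huxw
  · exact ⟨u, hu, σ b, ⟨b, hb, rfl⟩, T.not_mem_subColors_of_bestMatch σ hab hua hub⟩
  · obtain ⟨u', hu', hu'b⟩ := T.exists_isChild_root_anc (fun h => hroot (h ▸ hba.1))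
    have hu'a : ¬ T.anc u' a := fun h => hub (T.eq_of_isChild_root_of_anc hu hu' hua h ▸ hu'b)
    exact ⟨u', hu', σ a, ⟨a, hba.2.1, rfl⟩,
      T.not_mem_subColors_of_bestMatch σ hba hu'b hu'a⟩

end RTree

/-- Let `(T,σ)` be the least resolved tree (with root `ρ`) of
some 2-colored BMG `G(T,σ)`.  Then `G(T,σ)` is connected iff `S_ρ ≠ ∅`. -/
theorem bmg_connected_iff_root_support_nonempty {V C : Type} [Fintype V]
    (T : RTree V) (σ : V → C) (hLRT : T.LeastResolved σ)
    (h2 : T.TwoColored σ) :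
    T.BMGConnected σ ↔ (T.SupportLeaves T.root).Nonempty := by
  refine ⟨fun hconn => ?_, fun ⟨v, hv⟩ =>
    T.bmgConnected_of_mem_supportLeaves_root σ (T.exists_isLeaf_color_ne_of_twoColored σ h2) hv⟩
  obtain ⟨u, hu, c, hc, huc⟩ := T.exists_isChild_root_not_mem_subColors σ hLRT.1
    (T.not_isLeaf_root_of_twoColored σ h2) hconn
  by_contra hS
  have hnl : ¬ T.IsLeaf u := fun hl => hS ⟨u, hu, hl⟩
  exact hLRT.2 u (T.redundant_of_subColors_subsingleton σ (Ne.symm hu.2.1) hnl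
    (T.subColors_subsingleton_of_twoColored σ h2 hc huc))
end

section
/- Let (G,σ) be a 2-BMG, (T,σ) its least resolved tree with root ρ, and S_ρ the support leaves of ρ. If W := U(G,σ) \ S_ρ is nonempty, then ρ has a unique child v that is an inner vertex, and the set of support leaves S_v of v contains vertices of both colors. -/
section Aux

open Classical

variable {V C : Type} [Fintype V]

/-- the finite set of ancestors of a vertex. -/
noncomputable def RTree.ancSet (T : RTree V) (u : V) : Finset V :=
  Finset.univ.filter (fun w => T.anc w u)

lemma RTree.mem_ancSet (T : RTree V) {w u : V} : w ∈ T.ancSet u ↔ T.anc w u := by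
  simp [RTree.ancSet]

lemma RTree.ancSet_subset (T : RTree V) {u u' : V} (h : T.anc u u') :
    T.ancSet u ⊆ T.ancSet u' := by
  intro w hw
  rw [RTree.mem_ancSet] at hw ⊢
  exact T.trans _ _ _ hw h

lemma RTree.anc_of_card_le (T : RTree V) {u u' : V} (h : T.anc u u')
    (hc : (T.ancSet u').card ≤ (T.ancSet u).card) : T.anc u' u := by
  have he : T.ancSet u = T.ancSet u' :=
    Finset.eq_of_subset_of_card_le (T.ancSet_subset h) hc
  have : u' ∈ T.ancSet u' := (T.mem_ancSet).2 (T.refl u')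
  rw [← he, RTree.mem_ancSet] at this
  exact this

lemma RTree.exists_child_anc (T : RTree V) {u x : V} (h : T.anc u x) (hne : u ≠ x) :
    ∃ v, T.IsChild v u ∧ T.anc v x := by
  set S : Finset V := Finset.univ.filter (fun w => T.anc w x ∧ T.anc u w ∧ w ≠ u) with hS
  have hxS : x ∈ S := by
    simp only [hS, Finset.mem_filter, Finset.mem_univ, true_and]
    exact ⟨T.refl x, h, Ne.symm hne⟩
  obtain ⟨v, hvS, hmin⟩ := S.exists_min_image (fun w => (T.ancSet w).card) ⟨x, hxS⟩
  simp only [hS, Finset.mem_filter, Finset.mem_univ, true_and] at hvS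
  obtain ⟨hvx, huv, hvu⟩ := hvS
  refine ⟨v, ⟨huv, Ne.symm hvu, ?_⟩, hvx⟩
  intro w huw hwv
  by_cases hw : w = u
  · exact Or.inl hw
  · right
    have hwS : w ∈ S := by
      simp only [hS, Finset.mem_filter, Finset.mem_univ, true_and]
      exact ⟨T.trans _ _ _ hwv hvx, huw, hw⟩
    have h1 := hmin w hwS
    have h2 : T.anc v w := T.anc_of_card_le hwv h1
    exact T.antisymm _ _ hwv h2

lemma RTree.exists_leaf_below (T : RTree V) (u : V) :
    ∃ z, T.anc u z ∧ T.IsLeaf z := by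
  set S : Finset V := Finset.univ.filter (fun w => T.anc u w) with hS
  have huS : u ∈ S := by
    simp only [hS, Finset.mem_filter, Finset.mem_univ, true_and]; exact T.refl u
  obtain ⟨z, hzS, hmax⟩ := S.exists_max_image (fun w => (T.ancSet w).card) ⟨u, huS⟩
  simp only [hS, Finset.mem_filter, Finset.mem_univ, true_and] at hzS
  refine ⟨z, hzS, ?_⟩
  intro w hzw
  have hwS : w ∈ S := by
    simp only [hS, Finset.mem_filter, Finset.mem_univ, true_and]
    exact T.trans _ _ _ hzS hzw
  exact T.antisymm _ _ (T.anc_of_card_le hzw (hmax w hwS)) hzw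

lemma RTree.not_isLeaf_iff (T : RTree V) {v : V} (h : ¬ T.IsLeaf v) :
    ∃ w, T.anc v w ∧ w ≠ v := by
  by_contra hc
  push_neg at hc
  exact h (fun w hw => hc w hw)

lemma RTree.contract_leaf_iff {C : Type} (T : RTree V) (σ : V → C) {v : V}
    (hv : v ≠ T.root) (hinner : ¬ T.IsLeaf v) (w : {w : V // w ≠ v}) :
    T.IsLeaf w.1 ↔ (T.contract v hv).IsLeaf w := by
  constructor
  · intro h w' hw'
    exact Subtype.ext (h w'.1 hw')
  · intro h u hu
    by_cases huv : u = v
    · exfalso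
      obtain ⟨w₃, hw₃, hne₃⟩ := T.not_isLeaf_iff hinner
      have haw : T.anc w.1 w₃ := T.trans _ _ _ hu (huv ▸ hw₃)
      have h3 : w₃ = w.1 := congrArg Subtype.val (h ⟨w₃, hne₃⟩ haw)
      have : w.1 = v := T.antisymm _ _ (huv ▸ hu) (h3 ▸ hw₃)
      exact w.2 this
    · exact congrArg Subtype.val (h ⟨u, huv⟩ hu)

lemma RTree.redundant_of_key {C : Type} (T : RTree V) (σ : V → C) {v : V}
    (hv : v ≠ T.root) (hinner : ¬ T.IsLeaf v)
    (key : ∀ x y : V, T.IsLeaf x → T.IsLeaf y → σ x ≠ σ y →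
      (∀ y' : V, T.IsLeaf y' → σ y' = σ y →
        ∀ u : V, u ≠ v → T.anc u x → T.anc u y' → T.anc u y) →
      ∀ y' : V, T.IsLeaf y' → σ y' = σ y → T.anc v x → T.anc v y' → T.anc v y) :
    T.Redundant σ v := by
  refine ⟨hv, hinner, fun w => T.contract_leaf_iff σ hv hinner w, fun x y => ?_⟩
  constructor
  · rintro ⟨hx, hy, hσ, hbm⟩
    exact ⟨(T.contract_leaf_iff σ hv hinner x).1 hx,
      (T.contract_leaf_iff σ hv hinner y).1 hy, hσ,
      fun y' hy' hc u hux huy' =>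
        hbm y'.1 ((T.contract_leaf_iff σ hv hinner y').2 hy') hc u.1 hux huy'⟩
  · rintro ⟨hx, hy, hσ, hbm⟩
    have hx' := (T.contract_leaf_iff σ hv hinner x).2 hx
    have hy' := (T.contract_leaf_iff σ hv hinner y).2 hy
    refine ⟨hx', hy', hσ, ?_⟩
    have base : ∀ y'', T.IsLeaf y'' → σ y'' = σ y.1 →
        ∀ u, u ≠ v → T.anc u x.1 → T.anc u y'' → T.anc u y.1 := by
      intro y'' hl hcc u huv h1 h2
      have hy''v : y'' ≠ v := fun h => hinner (h ▸ hl)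
      exact hbm ⟨y'', hy''v⟩ ((T.contract_leaf_iff σ hv hinner ⟨y'', hy''v⟩).1 hl)
        hcc ⟨u, huv⟩ h1 h2
    intro y'' hl hcc u h1 h2
    by_cases huv : u = v
    · subst huv
      exact key x.1 y.1 hx' hy' hσ base y'' hl hcc h1 h2
    · exact base y'' hl hcc u huv h1 h2

lemma RTree.mono_redundant {C : Type} (T : RTree V) (σ : V → C) {v : V}
    (hv : v ≠ T.root) (hinner : ¬ T.IsLeaf v) {c : C}
    (hmono : ∀ z, T.IsLeaf z → T.anc v z → σ z = c) : T.Redundant σ v := by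
  refine T.redundant_of_key σ hv hinner ?_
  intro x y hx hy hσ _ y' hy' hc hvx hvy'
  exact (hσ (by rw [hmono x hx hvx, ← hc, hmono y' hy' hvy'])).elim

end Aux

/-- Let `(G,σ)` be a 2-BMG, `(T,σ)` its LRT with root `ρ`,
and `S_ρ` the support leaves of `ρ`.  If `W = U(G,σ) \ S_ρ ≠ ∅`, then `ρ` has
a unique inner-vertex child `v`, and the support leaves `S_v` of `v` contain
vertices of both colors. -/
theorem W_nonempty_unique_inner_child {V C : Type} [Fintype V]
    (T : RTree V) (σ : V → C) (hLRT : T.LeastResolved σ)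
    (h2 : T.TwoColored σ)
    (hW : (T.Umbrella σ \ T.SupportLeaves T.root).Nonempty) :
    ∃ v, (T.IsChild v T.root ∧ ¬ T.IsLeaf v) ∧
      (∀ v', T.IsChild v' T.root → ¬ T.IsLeaf v' → v' = v) ∧
      ∃ y ∈ T.SupportLeaves v, ∃ z ∈ T.SupportLeaves v, σ y ≠ σ z := by
  classical
  obtain ⟨hphylo, hirr⟩ := hLRT
  obtain ⟨c₁, c₂, hc12, hcol⟩ := h2
  obtain ⟨x, hxU, hxS⟩ := hW
  obtain ⟨hxleaf, humb⟩ := hxU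
  have hleafcol : ∀ z, T.IsLeaf z → σ z = c₁ ∨ σ z = c₂ := by
    intro z hz
    have hm : σ z ∈ T.leafColors σ := ⟨z, hz, rfl⟩
    rw [hcol] at hm
    simpa using hm
  obtain ⟨b, hba, hcolors, z₀, hz₀leaf, hz₀b⟩ :
      ∃ b, b ≠ σ x ∧ (∀ z, T.IsLeaf z → σ z = σ x ∨ σ z = b) ∧
        ∃ z, T.IsLeaf z ∧ σ z = b := by
    rcases hleafcol x hxleaf with h | h
    · refine ⟨c₂, by rw [h]; exact hc12.symm, ?_, ?_⟩
      · intro z hz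
        rcases hleafcol z hz with h' | h'
        · exact Or.inl (h'.trans h.symm)
        · exact Or.inr h'
      · have hm : c₂ ∈ T.leafColors σ := by rw [hcol]; simp
        obtain ⟨z, hz, hzc⟩ := hm
        exact ⟨z, hz, hzc⟩
    · refine ⟨c₁, by rw [h]; exact hc12, ?_, ?_⟩
      · intro z hz
        rcases hleafcol z hz with h' | h'
        · exact Or.inr h'
        · exact Or.inl (h'.trans h.symm)
      · have hm : c₁ ∈ T.leafColors σ := by rw [hcol]; simp
        obtain ⟨z, hz, hzc⟩ := hm
        exact ⟨z, hz, hzc⟩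
  have hxroot : x ≠ T.root := by
    intro h
    have hz₀x : z₀ = x := hxleaf z₀ (by rw [h]; exact T.root_anc z₀)
    exact hba (by rw [← hz₀b, hz₀x])
  obtain ⟨v, hvchild, hvx⟩ := T.exists_child_anc (T.root_anc x) (Ne.symm hxroot)
  have hvinner : ¬ T.IsLeaf v := by
    intro hl
    have hxv : x = v := hl x hvx
    exact hxS ⟨by rw [hxv]; exact hvchild, hxleaf⟩
  have hvroot : v ≠ T.root := Ne.symm hvchild.2.1
  have below_ne_root : ∀ w, T.anc v w → w ≠ T.root := by
    intro w hw h
    exact hvroot (T.antisymm v T.root (h ▸ hw) (T.root_anc v))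
  -- all b-colored leaves lie below v
  have hball : ∀ y, T.IsLeaf y → σ y = b → T.anc v y := by
    by_cases hex : ∃ y', T.IsLeaf y' ∧ σ y' = b ∧ T.anc v y'
    · obtain ⟨y', hy'l, hy'b, hy'v⟩ := hex
      intro y hyl hyb
      have hbm := humb y hyl (by rw [hyb]; exact hba)
      exact hbm.2.2.2 y' hy'l (by rw [hy'b, hyb]) v hvx hy'v
    · exfalso
      push_neg at hex
      refine hirr v (T.mono_redundant σ hvroot hvinner (c := σ x) ?_)
      intro z hz hvz
      rcases hcolors z hz with h | h
      · exact h
      · exact (hex z hz h hvz).elim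
  -- v has a b-colored support leaf
  have hZ : ∃ z, T.IsChild z v ∧ T.IsLeaf z ∧ σ z = b := by
    by_contra hnz
    push_neg at hnz
    have H : ∀ z, T.IsLeaf z → σ z = b →
        ∃ w, T.IsChild w v ∧ T.anc w z ∧
          ∃ ya, T.IsLeaf ya ∧ T.anc w ya ∧ σ ya = σ x := by
      intro z hzl hzb
      have hvz := hball z hzl hzb
      have hzv : v ≠ z := fun h => hvinner (h ▸ hzl)
      obtain ⟨w, hwchild, hwz⟩ := T.exists_child_anc hvz hzv
      have hwne : w ≠ z := fun h => hnz z (h ▸ hwchild) hzl hzb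
      have hwinner : ¬ T.IsLeaf w := fun hl => hwne (hl z hwz).symm
      by_cases hya : ∃ ya, T.IsLeaf ya ∧ T.anc w ya ∧ σ ya = σ x
      · obtain ⟨ya, h1, h2, h3⟩ := hya
        exact ⟨w, hwchild, hwz, ya, h1, h2, h3⟩
      · exfalso
        push_neg at hya
        refine hirr w (T.mono_redundant σ (below_ne_root w hwchild.1) hwinner (c := b) ?_)
        intro z' hz' hwz'
        rcases hcolors z' hz' with h | h
        · exact (hya z' hz' hwz' h).elim
        · exact h
    refine hirr v (T.redundant_of_key σ hvroot hvinner ?_)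
    intro x₁ y₁ hx₁ hy₁ hσ₁ base y' hy'l hy'c hvx₁ hvy'
    rcases hcolors y₁ hy₁ with hy₁a | hy₁b
    · have hx₁b : σ x₁ = b := by
        rcases hcolors x₁ hx₁ with h | h
        · exact (hσ₁ (h.trans hy₁a.symm)).elim
        · exact h
      obtain ⟨w, hwchild, hwx₁, ya, hyal, hwya, hyaa⟩ := H x₁ hx₁ hx₁b
      have hy := base ya hyal (hyaa.trans hy₁a.symm) w (Ne.symm hwchild.2.1) hwx₁ hwya
      exact T.trans _ _ _ hwchild.1 hy
    · exact hball y₁ hy₁ hy₁b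
  obtain ⟨z, hzchild, hzleaf, hzb⟩ := hZ
  -- x itself is a support leaf of v
  have hvxne : v ≠ x := fun h => hvinner (h ▸ hxleaf)
  obtain ⟨w, hwchild, hwx⟩ := T.exists_child_anc hvx hvxne
  have hwxeq : w = x := by
    by_contra hne
    have hwinner : ¬ T.IsLeaf w := fun hl => hne (hl x hwx).symm
    by_cases hbw : ∃ y', T.IsLeaf y' ∧ σ y' = b ∧ T.anc w y'
    · obtain ⟨y', h1, h2, h3⟩ := hbw
      have hwz : T.anc w z :=
        (humb z hzleaf (by rw [hzb]; exact hba)).2.2.2 y' h1 (by rw [h2, hzb]) w hwx h3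
      rcases hzchild.2.2 w hwchild.1 hwz with h | h
      · exact hwchild.2.1 h.symm
      · exact hwinner (by rw [h]; exact hzleaf)
    · push_neg at hbw
      refine hirr w (T.mono_redundant σ (below_ne_root w hwchild.1) hwinner (c := σ x) ?_)
      intro z' hz' hwz'
      rcases hcolors z' hz' with h | h
      · exact h
      · exact (hbw z' hz' h hwz').elim
  have hxchild : T.IsChild x v := hwxeq ▸ hwchild
  have huniq : ∀ v', T.IsChild v' T.root → ¬ T.IsLeaf v' → v' = v := by
    intro v' hv'c hv'inner
    by_contra hne
    refine hirr v' (T.mono_redundant σ (Ne.symm hv'c.2.1) hv'inner (c := σ x) ?_)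
    intro z' hz' hv'z'
    rcases hcolors z' hz' with h | h
    · exact h
    · exfalso
      have hvz' := hball z' hz' h
      rcases T.chain v v' z' hvz' hv'z' with hcc | hcc
      · rcases hv'c.2.2 v hvchild.1 hcc with h' | h'
        · exact hvchild.2.1 h'.symm
        · exact hne h'.symm
      · rcases hvchild.2.2 v' hv'c.1 hcc with h' | h'
        · exact hv'c.2.1 h'.symm
        · exact hne h'
  refine ⟨v, ⟨hvchild, hvinner⟩, huniq, x, ⟨hxchild, hxleaf⟩, z, ⟨hzchild, hzleaf⟩, ?_⟩
  intro h
  rw [hzb] at h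
  exact hba h.symm
end
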